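/- arXiv:0903.3357 — 5 statements merged into one kernel-verified Lean document; each statement's English description precedes it below -/
import Mathlib

section
/- Let n, ω be integers with n ≥ 3 and 2ω + 6 ≤ n. Define d_k = 4[(n-1)(n-2)ν_k - n(n-2)² + (ω+2)²(n²+n+2)] with ν_k = (ω-2k+2)(n+ω-2k). Then d_k > 0 for every integer k with 1 ≤ k ≤ ⌊ω/2⌋. -/
theorem d_pos (n ω k : ℤ) (hn : 3 ≤ n) (hnω : 2 * ω + 6 ≤ n)
    (hk1 : 1 ≤ k) (hk2 : k ≤ ω / 2) :
    0 < 4 * ((n - 1) * (n - 2) * ((ω - 2 * k + 2) * (n + ω - 2 * k))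
      - n * (n - 2) ^ 2 + (ω + 2) ^ 2 * (n ^ 2 + n + 2)) := by
  have h2k : k * 2 ≤ ω := (Int.le_ediv_iff_mul_le (by norm_num)).mp hk2
  have hω : 2 ≤ ω := by linarith
  have ha : 2 ≤ ω - 2 * k + 2 := by linarith
  have hb : n ≤ n + ω - 2 * k := by linarith
  nlinarith [mul_le_mul ha hb (by linarith) (by linarith : (0:ℤ) ≤ ω - 2*k + 2),
    sq_nonneg (ω + 2), sq_nonneg n, mul_pos (by linarith : (0:ℤ) < n - 1) (by linarith : (0:ℤ) < n - 2),
    mul_nonneg (mul_nonneg (by linarith : (0:ℤ) ≤ n) (by linarith : (0:ℤ) ≤ n - 2)) (by linarith : (0:ℤ) ≤ n)]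
end

section
/- Let n, ω be integers with n ≥ 3 and ω + 2 ≤ (n-2)/2, and let 1 ≤ k ≤ ⌊ω/2⌋. Define Δ_k = (n-2)² - d_k·u_k/ν_k², where ν_k = (ω-2k+2)(n+ω-2k), u_k = ((n-3)/(4(n-2)) - ((n-1)²+(n-1)(ω+2)²)/(4(n-2)(ν_k-n+1)))·ν_k, and d_k = 4[(n-1)(n-2)ν_k - n(n-2)² + (ω+2)²(n²+n+2)]. Then Δ_k > 0. -/
noncomputable section

/-- `ν_k = (ω - 2k + 2)(n + ω - 2k)` as a real number. -/
def nu (n ω k : ℤ) : ℝ := ((ω : ℝ) - 2 * k + 2) * ((n : ℝ) + ω - 2 * k)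

/-- `u_k` from the paper. -/
def uCoeff (n ω k : ℤ) : ℝ :=
  (((n : ℝ) - 3) / (4 * ((n : ℝ) - 2)) -
      (((n : ℝ) - 1) ^ 2 + ((n : ℝ) - 1) * ((ω : ℝ) + 2) ^ 2) /
        (4 * ((n : ℝ) - 2) * (nu n ω k - n + 1))) * nu n ω k

/-- `d_k` from the paper. -/
def dCoeff (n ω k : ℤ) : ℝ :=
  4 * (((n : ℝ) - 1) * ((n : ℝ) - 2) * nu n ω k - (n : ℝ) * ((n : ℝ) - 2) ^ 2 +
    ((ω : ℝ) + 2) ^ 2 * ((n : ℝ) ^ 2 + n + 2))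

/-- The discriminant `Δ_k = (n-2)² - d_k u_k / ν_k²`. -/
def disc (n ω k : ℤ) : ℝ := ((n : ℝ) - 2) ^ 2 - dCoeff n ω k * uCoeff n ω k / nu n ω k ^ 2

/-- The smaller root `x_k`. -/
def xRoot (n ω k : ℤ) : ℝ :=
  (((n : ℝ) - 2) ^ 2 - ((n : ℝ) - 2) * Real.sqrt (disc n ω k)) / dCoeff n ω k

/-- The larger root `y_k`. -/
def yRoot (n ω k : ℤ) : ℝ :=
  (((n : ℝ) - 2) ^ 2 + ((n : ℝ) - 2) * Real.sqrt (disc n ω k)) / dCoeff n ω k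

end

set_option maxHeartbeats 2000000 in
theorem disc_pos (n ω k : ℤ) (hn : 3 ≤ n) (hωn : 2 * (ω + 2) ≤ n - 2)
    (hk1 : 1 ≤ k) (hk2 : k ≤ ω / 2) :
    0 < disc n ω k := by
  have hω2 : (2:ℤ) ≤ ω := by omega
  have h2k : 2*k ≤ ω := by omega
  have hW : (2:ℝ) ≤ (ω:ℝ) := by exact_mod_cast hω2
  have hN : 2*(ω:ℝ) + 6 ≤ (n:ℝ) := by
    have : 2*ω + 6 ≤ n := by omega
    exact_mod_cast this
  have hNW : (0:ℝ) ≤ (n:ℝ) - 2*(ω:ℝ) - 6 := by linarith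
  have hWn : (0:ℝ) ≤ (ω:ℝ) - 2 := by linarith
  have ha2 : (2:ℝ) ≤ (ω:ℝ) - 2*(k:ℝ) + 2 := by
    have : (2:ℤ) ≤ ω - 2*k + 2 := by omega
    exact_mod_cast this
  have hb : (n:ℝ) ≤ (n:ℝ) + (ω:ℝ) - 2*(k:ℝ) := by
    have : (n:ℤ) ≤ n + ω - 2*k := by exact_mod_cast (by omega : (n:ℤ) ≤ n + ω - 2*k)
    exact_mod_cast this
  have hνlo : 2*(n:ℝ) ≤ nu n ω k := by
    unfold nu
    nlinarith [mul_nonneg (by linarith : (0:ℝ) ≤ (ω:ℝ) - 2*(k:ℝ) + 2 - 2)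
      (by linarith : (0:ℝ) ≤ (n:ℝ) + (ω:ℝ) - 2*(k:ℝ))]
  have hνE : (0:ℝ) ≤ nu n ω k - 2*(n:ℝ) := by linarith
  -- square-root substitutions
  set a := Real.sqrt ((ω:ℝ) - 2) with hadef
  set b := Real.sqrt ((n:ℝ) - 2*(ω:ℝ) - 6) with hbdef
  set c := Real.sqrt (nu n ω k - 2*(n:ℝ)) with hcdef
  have hW' : (ω:ℝ) = a^2 + 2 := by
    rw [hadef, Real.sq_sqrt hWn]; ring
  have hN' : (n:ℝ) = b^2 + 2*a^2 + 10 := by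
    rw [hbdef, Real.sq_sqrt hNW, hW']; ring
  have hV' : nu n ω k = c^2 + 2*b^2 + 4*a^2 + 20 := by
    rw [hcdef, Real.sq_sqrt hνE, hN']; ring
  have hv0 : (0:ℝ) < nu n ω k := by linarith
  have hE : (0:ℝ) < nu n ω k - (n:ℝ) + 1 := by linarith
  have hn2 : (0:ℝ) < (n:ℝ) - 2 := by linarith
  -- key polynomial inequality
  have hkey : dCoeff n ω k * (((n:ℝ) - 3)*(nu n ω k - (n:ℝ) + 1) -
      (((n:ℝ) - 1)^2 + ((n:ℝ) - 1)*((ω:ℝ) + 2)^2)) <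
      4*((n:ℝ) - 2)^3*(nu n ω k - (n:ℝ) + 1)*(nu n ω k) := by
    have hdiff : 4*((n:ℝ) - 2)^3*(nu n ω k - (n:ℝ) + 1)*(nu n ω k) -
        dCoeff n ω k * (((n:ℝ) - 3)*(nu n ω k - (n:ℝ) + 1) -
        (((n:ℝ) - 1)^2 + ((n:ℝ) - 1)*((ω:ℝ) + 2)^2)) =
        1985024 + 33536*c^2 + 32*c^4 + 773696*b^2 + 17568*b^2*c^2 + 4*b^2*c^4 +
        121664*b^4 + 3344*b^4*c^2 + 9856*b^6 + 272*b^6*c^2 + 424*b^8 + 8*b^8*c^2 +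
        8*b^10 + 2824320*a^2 + 30784*a^2*c^2 + 8*a^2*c^4 + 898048*a^2*b^2 +
        12288*a^2*b^2*c^2 + 106368*a^2*b^4 + 1568*a^2*b^4*c^2 + 5600*a^2*b^6 +
        64*a^2*b^6*c^2 + 112*a^2*b^8 + 1727104*a^4 + 10656*a^4*c^2 + 435680*a^4*b^2 +
        2872*a^4*b^2*c^2 + 37008*a^4*b^4 + 184*a^4*b^4*c^2 + 1108*a^4*b^6 + 4*a^4*b^8 +
        589248*a^6 + 1648*a^6*c^2 + 113664*a^6*b^2 + 224*a^6*b^2*c^2 + 6520*a^6*b^4 +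
        96*a^6*b^6 + 121344*a^8 + 96*a^8*c^2 + 16932*a^8*b^2 + 600*a^8*b^4 + 4*a^8*b^6 +
        15112*a^10 + 1376*a^10*b^2 + 24*a^10*b^4 + 1056*a^12 + 48*a^12*b^2 + 32*a^14 := by
      unfold dCoeff
      rw [hV', hN', hW']
      ring
    linarith [hdiff,
      (by positivity : (0:ℝ) ≤ 33536*c^2 + 32*c^4 + 773696*b^2 + 17568*b^2*c^2 + 4*b^2*c^4 +
        121664*b^4 + 3344*b^4*c^2 + 9856*b^6 + 272*b^6*c^2 + 424*b^8 + 8*b^8*c^2 +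
        8*b^10 + 2824320*a^2 + 30784*a^2*c^2 + 8*a^2*c^4 + 898048*a^2*b^2 +
        12288*a^2*b^2*c^2 + 106368*a^2*b^4 + 1568*a^2*b^4*c^2 + 5600*a^2*b^6 +
        64*a^2*b^6*c^2 + 112*a^2*b^8 + 1727104*a^4 + 10656*a^4*c^2 + 435680*a^4*b^2 +
        2872*a^4*b^2*c^2 + 37008*a^4*b^4 + 184*a^4*b^4*c^2 + 1108*a^4*b^6 + 4*a^4*b^8 +
        589248*a^6 + 1648*a^6*c^2 + 113664*a^6*b^2 + 224*a^6*b^2*c^2 + 6520*a^6*b^4 +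
        96*a^6*b^6 + 121344*a^8 + 96*a^8*c^2 + 16932*a^8*b^2 + 600*a^8*b^4 + 4*a^8*b^6 +
        15112*a^10 + 1376*a^10*b^2 + 24*a^10*b^4 + 1056*a^12 + 48*a^12*b^2 + 32*a^14)]
  -- relate uCoeff
  have hu2 : uCoeff n ω k * (4*((n:ℝ) - 2)*(nu n ω k - (n:ℝ) + 1)) =
      (((n:ℝ) - 3)*(nu n ω k - (n:ℝ) + 1) -
        (((n:ℝ) - 1)^2 + ((n:ℝ) - 1)*((ω:ℝ) + 2)^2)) * nu n ω k := by
    unfold uCoeff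
    field_simp
  have h4 : (0:ℝ) < 4*((n:ℝ) - 2)*(nu n ω k - (n:ℝ) + 1) := by positivity
  have h7 : dCoeff n ω k * uCoeff n ω k * (4*((n:ℝ) - 2)*(nu n ω k - (n:ℝ) + 1)) <
      ((n:ℝ) - 2)^2 * nu n ω k ^ 2 * (4*((n:ℝ) - 2)*(nu n ω k - (n:ℝ) + 1)) := by
    calc dCoeff n ω k * uCoeff n ω k * (4*((n:ℝ) - 2)*(nu n ω k - (n:ℝ) + 1))
        = (dCoeff n ω k * (((n:ℝ) - 3)*(nu n ω k - (n:ℝ) + 1) -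
          (((n:ℝ) - 1)^2 + ((n:ℝ) - 1)*((ω:ℝ) + 2)^2))) * nu n ω k := by
          rw [mul_assoc, hu2]; ring
      _ < (4*((n:ℝ) - 2)^3*(nu n ω k - (n:ℝ) + 1)*(nu n ω k)) * nu n ω k :=
          mul_lt_mul_of_pos_right hkey hv0
      _ = ((n:ℝ) - 2)^2 * nu n ω k ^ 2 * (4*((n:ℝ) - 2)*(nu n ω k - (n:ℝ) + 1)) := by ring
  have h6 : dCoeff n ω k * uCoeff n ω k < ((n:ℝ) - 2)^2 * nu n ω k ^ 2 :=
    lt_of_mul_lt_mul_right h7 (le_of_lt h4)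
  have h5 : dCoeff n ω k * uCoeff n ω k / nu n ω k ^ 2 < ((n:ℝ) - 2)^2 := by
    rw [div_lt_iff₀ (by positivity : (0:ℝ) < nu n ω k ^ 2)]
    linarith
  unfold disc
  linarith
end

section
/- Let n, ω be integers with n ≥ 3 and ω + 2 ≤ (n-2)/2. With notation ν_k, u_k, d_k, Δ_k as in the paper, set x_k = ((n-2)² - (n-2)√Δ_k)/d_k and y_k = ((n-2)² + (n-2)√Δ_k)/d_k. Then for all 1 ≤ k < j ≤ ⌊ω/2⌋, one has x_k < y_j. -/
theorem xRoot_lt_yRoot (n ω : ℤ) (hn : 3 ≤ n) (hωn : 2 * (ω + 2) ≤ n - 2) :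
    ∀ k j : ℤ, 1 ≤ k → k < j → j ≤ ω / 2 → xRoot n ω k < yRoot n ω j := by
  intro k j hk hkj hj
  have h2j : 2 * j ≤ ω := by omega
  have hω4 : (4 : ℤ) ≤ ω := by omega
  have hn14 : (14 : ℤ) ≤ n := by omega
  -- real versions
  have hN : (14 : ℝ) ≤ (n : ℝ) := by exact_mod_cast hn14
  have hW : (4 : ℝ) ≤ (ω : ℝ) := by exact_mod_cast hω4
  have h2jr : 2 * (j : ℝ) ≤ (ω : ℝ) := by exact_mod_cast h2j
  have hkjr : (k : ℝ) + 1 ≤ (j : ℝ) := by exact_mod_cast hkj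
  have hkr : (1 : ℝ) ≤ (k : ℝ) := by exact_mod_cast hk
  set N : ℝ := (n : ℝ)
  set W : ℝ := (ω : ℝ)
  -- bounds on nu
  have hνj : 2 * N ≤ nu n ω j := by
    unfold nu
    nlinarith [mul_nonneg (by linarith : (0:ℝ) ≤ W - 2 * j) (by linarith : (0:ℝ) ≤ N + W - 2 * j)]
  have hνjk : nu n ω j < nu n ω k := by
    unfold nu
    nlinarith [mul_nonneg (by linarith : (0:ℝ) ≤ W - 2 * j) (by linarith : (0:ℝ) ≤ (j:ℝ) - k),
      mul_nonneg (by linarith : (0:ℝ) ≤ (j:ℝ) - k) (by linarith : (0:ℝ) ≤ N + W - 2 * j)]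
  have hdj : 0 < dCoeff n ω j := by
    unfold dCoeff
    nlinarith [mul_nonneg (mul_nonneg (by linarith : (0:ℝ) ≤ N - 1) (by linarith : (0:ℝ) ≤ N - 2))
      (by linarith : (0:ℝ) ≤ nu n ω j - 2 * N), sq_nonneg (W + 2)]
  have hdd : dCoeff n ω j < dCoeff n ω k := by
    unfold dCoeff
    nlinarith [mul_pos (mul_pos (by linarith : (0:ℝ) < N - 1) (by linarith : (0:ℝ) < N - 2))
      (by linarith : (0:ℝ) < nu n ω k - nu n ω j)]
  have hdk : 0 < dCoeff n ω k := lt_trans hdj hdd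
  have hsk : 0 ≤ Real.sqrt (disc n ω k) := Real.sqrt_nonneg _
  have hsj : 0 ≤ Real.sqrt (disc n ω j) := Real.sqrt_nonneg _
  have hN2 : (0 : ℝ) < (N - 2) ^ 2 := by nlinarith
  have h1 : xRoot n ω k ≤ (N - 2) ^ 2 / dCoeff n ω k := by
    unfold xRoot
    apply (div_le_div_iff_of_pos_right hdk).mpr
    nlinarith
  have h2 : (N - 2) ^ 2 / dCoeff n ω k < (N - 2) ^ 2 / dCoeff n ω j :=
    div_lt_div_of_pos_left hN2 hdj hdd
  have h3 : (N - 2) ^ 2 / dCoeff n ω j ≤ yRoot n ω j := by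
    unfold yRoot
    apply (div_le_div_iff_of_pos_right hdj).mpr
    nlinarith
  linarith
end

section
/- Let n, ω be integers with n ≥ 3 and ω + 2 ≤ (n-2)/2, and suppose ω = 3. Then there exists a real number c such that for k = 1 (the only index with 1 ≤ k ≤ ⌊ω/2⌋), (d_1/(2(n-2)))·c² - (n-2)·c + (n-2)·u_1/(2ν_1²) < 0, where ν_1 = ω(n+ω-2) = 3(n+1), u_1 = ((n-3)/(4(n-2)) - ((n-1)²+(n-1)·25)/(4(n-2)(ν_1-n+1)))·ν_1, and d_1 = 4[(n-1)(n-2)ν_1 - n(n-2)² + 25(n²+n+2)]. -/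
/-! A quadratic with positive discriminant takes negative values, and the discriminant of the
quadratic in `c` is exactly `Δ_1`. For `ω = 3`, clearing the (positive) denominators turns
`Δ_1 > 0` into the positivity of a quintic in `n` whose only negative coefficient is the
constant term. -/

theorem exists_neg_of_discrim_pos {K : Type*} [Field K] [LinearOrder K] [IsStrictOrderedRing K]
    {a b c : K} (h : 0 < discrim a b c) : ∃ x, a * (x * x) + b * x + c < 0 := by
  by_contra! hx
  exact h.not_ge (discrim_le_zero hx)

theorem discrim_eq_disc (n ω k : ℤ) (hn : n ≠ 2) :
    discrim (dCoeff n ω k / (2 * ((n : ℝ) - 2))) (-((n : ℝ) - 2))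
      (((n : ℝ) - 2) * uCoeff n ω k / (2 * nu n ω k ^ 2)) = disc n ω k := by
  have : (n : ℝ) - 2 ≠ 0 := sub_ne_zero.mpr (by exact_mod_cast hn)
  rw [discrim, disc]
  field_simp
  ring

theorem nu_three_one (n : ℤ) : nu n 3 1 = 3 * ((n : ℝ) + 1) := by
  rw [nu]; push_cast; ring

theorem dCoeff_three_one (n : ℤ) :
    dCoeff n 3 1 = 4 * (2 * (n : ℝ) ^ 3 + 23 * n ^ 2 + 18 * n + 56) := by
  rw [dCoeff, nu_three_one]; push_cast; ring

theorem uCoeff_three_one (n : ℤ) (h2 : n ≠ 2) (hm2 : n ≠ -2) :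
    uCoeff n 3 1 = 3 * ((n : ℝ) + 1) * (n ^ 2 - 25 * n + 12) / (8 * (n - 2) * (n + 2)) := by
  have h2' : (n : ℝ) - 2 ≠ 0 := sub_ne_zero.mpr (by exact_mod_cast h2)
  have hm2' : (n : ℝ) + 2 ≠ 0 := by
    rw [← sub_neg_eq_add, sub_ne_zero]; exact_mod_cast hm2
  have hden : nu n 3 1 - n + 1 = 2 * ((n : ℝ) + 2) := by rw [nu_three_one]; ring
  rw [uCoeff, hden, nu_three_one]
  push_cast
  field_simp
  ring

theorem disc_three_one_pos (n : ℤ) (hn : 3 ≤ n) : 0 < disc n 3 1 := by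
  have hN : (3 : ℝ) ≤ n := by exact_mod_cast hn
  set N : ℝ := (n : ℝ)
  have hN0 : 0 < N := by linarith
  have hden : 0 < 6 * (N + 1) * (N - 2) * (N + 2) :=
    mul_pos (mul_pos (by linarith) (by linarith)) (by linarith)
  have hdu : dCoeff n 3 1 * uCoeff n 3 1 / nu n 3 1 ^ 2 =
      (2 * N ^ 3 + 23 * N ^ 2 + 18 * N + 56) * (N ^ 2 - 25 * N + 12) /
        (6 * (N + 1) * (N - 2) * (N + 2)) := by
    rw [dCoeff_three_one, uCoeff_three_one n (by omega) (by omega), nu_three_one]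
    have : N + 1 ≠ 0 := by linarith
    field_simp
    ring
  have hgap : 6 * (N + 1) * (N - 2) * (N + 2) * (N - 2) ^ 2 -
      (2 * N ^ 3 + 23 * N ^ 2 + 18 * N + 56) * (N ^ 2 - 25 * N + 12) =
        4 * N ^ 5 + 9 * N ^ 4 + 509 * N ^ 3 + 214 * N ^ 2 + 1184 * N - 768 := by ring
  rw [disc, hdu, sub_pos, div_lt_iff₀ hden]
  linarith [pow_pos hN0 5, pow_pos hN0 4, pow_pos hN0 3, pow_pos hN0 2]

theorem omega_three_case_general (n : ℤ) (hn : 3 ≤ n) :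
    ∃ c : ℝ,
      dCoeff n 3 1 / (2 * ((n : ℝ) - 2)) * c ^ 2 - ((n : ℝ) - 2) * c +
        ((n : ℝ) - 2) * uCoeff n 3 1 / (2 * nu n 3 1 ^ 2) < 0 := by
  have hdisc := disc_three_one_pos n hn
  rw [← discrim_eq_disc n 3 1 (by omega)] at hdisc
  obtain ⟨c, hc⟩ := exists_neg_of_discrim_pos hdisc
  exact ⟨c, by linarith⟩

theorem omega_three_case (n : ℤ) (hn : 3 ≤ n) (hωn : 2 * ((3 : ℤ) + 2) ≤ n - 2) :
    ∃ c : ℝ,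
      dCoeff n 3 1 / (2 * ((n : ℝ) - 2)) * c ^ 2 - ((n : ℝ) - 2) * c +
        ((n : ℝ) - 2) * uCoeff n 3 1 / (2 * nu n 3 1 ^ 2) < 0 :=
  omega_three_case_general n hn
end

section
/- Let n, ω be integers with n ≥ 3, ω = 4, and ω + 2 ≤ (n-2)/2 (i.e., n ≥ 14). With ν_k = (ω-2k+2)(n+ω-2k), u_k, d_k, Δ_k, x_k, y_k defined as in the paper for k ∈ {1,2}, the open intervals (x_1, y_1) and (x_2, y_2) have nonempty intersection; hence there exists c ∈ ℝ with (d_k/(2(n-2)))c² - (n-2)c + (n-2)u_k/(2ν_k²) < 0 for both k = 1 and k = 2. -/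
/-!
Take `c = (n-2)² / d₁`, the vertex of the first quadratic. There its value is
`-(n-2) Δ₁ / (2 d₁)`, negative because `Δ₁ > 0`. The second quadratic is negative at `c` too:
its `c`-dependent part `c (d₂ c / (2(n-2)) - (n-2))` is negative because `d₂ < 2 d₁`, and its
constant term is negative because `u₂ < 0`. Since `d₁, d₂ > 0`, a point where a quadratic is
negative lies strictly between its roots, so `c ∈ (x₁, y₁) ∩ (x₂, y₂)`.
-/

open Set

-- With `m = n - 2` and `e = u_k / ν_k²` this is the quadratic of the paper, with roots
-- `(m² ∓ m √(m² - d e)) / d`.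
noncomputable def quad (m d e c : ℝ) : ℝ := d / (2 * m) * c ^ 2 - m * c + m * e / 2

section Quadratic

variable {m d e c : ℝ}

theorem mem_Ioo_of_quad_neg (hm : 0 < m) (hd : 0 < d) (h : quad m d e c < 0) :
    c ∈ Ioo ((m ^ 2 - m * √(m ^ 2 - d * e)) / d) ((m ^ 2 + m * √(m ^ 2 - d * e)) / d) := by
  have hsq : (d * c - m ^ 2) ^ 2 - m ^ 2 * (m ^ 2 - d * e) = 2 * m * d * quad m d e c := by
    unfold quad
    field_simp
    ring
  have hlt : (d * c - m ^ 2) ^ 2 < m ^ 2 * (m ^ 2 - d * e) := by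
    nlinarith [mul_pos (mul_pos hm hd) (neg_pos.mpr h)]
  have hΔ : 0 ≤ m ^ 2 - d * e := by nlinarith [sq_nonneg (d * c - m ^ 2)]
  have habs : |d * c - m ^ 2| < m * √(m ^ 2 - d * e) := by
    refine abs_lt_of_sq_lt_sq ?_ (by positivity)
    rwa [mul_pow, Real.sq_sqrt hΔ]
  obtain ⟨hleft, hright⟩ := abs_lt.mp habs
  constructor
  · rw [div_lt_iff₀ hd]
    linarith
  · rw [lt_div_iff₀ hd]
    linarith

theorem quad_vertex_neg (hm : 0 < m) (hd : 0 < d) (hΔ : 0 < m ^ 2 - d * e) :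
    quad m d e (m ^ 2 / d) < 0 := by
  have hvertex : quad m d e (m ^ 2 / d) = -(m / (2 * d) * (m ^ 2 - d * e)) := by
    unfold quad
    field_simp
    ring
  rw [hvertex, neg_lt_zero]
  positivity

theorem quad_neg_at_vertex_of_lt {d₁ : ℝ} (hm : 0 < m) (hd₁ : 0 < d₁) (hd : d < 2 * d₁)
    (he : e < 0) : quad m d e (m ^ 2 / d₁) < 0 := by
  have hvalue : quad m d e (m ^ 2 / d₁) = m ^ 3 * (d - 2 * d₁) / (2 * d₁ ^ 2) + m * e / 2 := by
    unfold quad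
    field_simp
  rw [hvalue]
  have hquadratic : m ^ 3 * (d - 2 * d₁) / (2 * d₁ ^ 2) < 0 :=
    div_neg_of_neg_of_pos (mul_neg_of_pos_of_neg (by positivity) (by linarith)) (by positivity)
  nlinarith

end Quadratic

section PaperNotation

variable {n ω k : ℤ}

theorem quad_eq (c : ℝ) :
    dCoeff n ω k / (2 * ((n : ℝ) - 2)) * c ^ 2 - ((n : ℝ) - 2) * c +
        ((n : ℝ) - 2) * uCoeff n ω k / (2 * nu n ω k ^ 2) =
      quad ((n : ℝ) - 2) (dCoeff n ω k) (uCoeff n ω k / nu n ω k ^ 2) c := by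
  unfold quad
  ring

theorem disc_eq :
    disc n ω k = ((n : ℝ) - 2) ^ 2 - dCoeff n ω k * (uCoeff n ω k / nu n ω k ^ 2) := by
  rw [disc, mul_div_assoc]

theorem mem_Ioo_xRoot_yRoot {c : ℝ} (hm : (0 : ℝ) < n - 2) (hd : 0 < dCoeff n ω k)
    (h : quad ((n : ℝ) - 2) (dCoeff n ω k) (uCoeff n ω k / nu n ω k ^ 2) c < 0) :
    c ∈ Ioo (xRoot n ω k) (yRoot n ω k) := by
  rw [xRoot, yRoot, disc_eq]
  exact mem_Ioo_of_quad_neg hm hd h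

end PaperNotation

section OmegaFour

variable {n : ℤ}

theorem nu_four_one : nu n 4 1 = 4 * ((n : ℝ) + 2) := by
  unfold nu; push_cast; ring

theorem nu_four_two : nu n 4 2 = 2 * (n : ℝ) := by
  unfold nu; push_cast; ring

theorem dCoeff_four_one :
    dCoeff n 4 1 = 4 * (3 * (n : ℝ) ^ 3 + 36 * (n : ℝ) ^ 2 + 16 * n + 88) := by
  unfold dCoeff nu; push_cast; ring

theorem dCoeff_four_two :
    dCoeff n 4 2 = 4 * ((n : ℝ) ^ 3 + 34 * (n : ℝ) ^ 2 + 36 * n + 72) := by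
  unfold dCoeff nu; push_cast; ring

theorem uCoeff_four_two (hn : 3 ≤ n) :
    uCoeff n 4 2 = -(2 * n * (9 * (n : ℝ) - 8)) / (((n : ℝ) - 2) * (n + 1)) := by
  have hN : (3 : ℝ) ≤ n := by exact_mod_cast hn
  have hm : (n : ℝ) - 2 ≠ 0 := by linarith
  have hν : 2 * (n : ℝ) - n + 1 ≠ 0 := by linarith
  rw [uCoeff, nu_four_two]
  field_simp
  push_cast
  ring

theorem disc_four_one (hn : 3 ≤ n) :
    disc n 4 1 = (3 * (n : ℝ) ^ 5 + 9 * (n : ℝ) ^ 4 + 512 * (n : ℝ) ^ 3 + 136 * (n : ℝ) ^ 2 +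
      1624 * n - 640) / (6 * ((n : ℝ) - 2) * (n + 3) * (n + 2)) := by
  have hN : (3 : ℝ) ≤ n := by exact_mod_cast hn
  have hm : (n : ℝ) - 2 ≠ 0 := by linarith
  have h3 : (n : ℝ) + 3 ≠ 0 := by linarith
  have h2 : (n : ℝ) + 2 ≠ 0 := by linarith
  have hν : 4 * ((n : ℝ) + 2) - n + 1 ≠ 0 := by linarith
  rw [disc, uCoeff, nu_four_one, dCoeff_four_one]
  field_simp
  push_cast
  ring

theorem dCoeff_four_one_pos (hn : 0 ≤ n) : 0 < dCoeff n 4 1 := by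
  have hN : (0 : ℝ) ≤ n := by exact_mod_cast hn
  rw [dCoeff_four_one]
  positivity

theorem dCoeff_four_two_pos (hn : 0 ≤ n) : 0 < dCoeff n 4 2 := by
  have hN : (0 : ℝ) ≤ n := by exact_mod_cast hn
  rw [dCoeff_four_two]
  positivity

theorem dCoeff_four_two_lt (hn : 0 ≤ n) : dCoeff n 4 2 < 2 * dCoeff n 4 1 := by
  have hN : (0 : ℝ) ≤ n := by exact_mod_cast hn
  rw [dCoeff_four_one, dCoeff_four_two]
  nlinarith [pow_nonneg hN 3, pow_nonneg hN 2]

theorem uCoeff_four_two_neg (hn : 3 ≤ n) : uCoeff n 4 2 < 0 := by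
  have hN : (3 : ℝ) ≤ n := by exact_mod_cast hn
  rw [uCoeff_four_two hn, neg_div, neg_lt_zero]
  apply div_pos <;> nlinarith

theorem disc_four_one_pos (hn : 3 ≤ n) : 0 < disc n 4 1 := by
  have hN : (3 : ℝ) ≤ n := by exact_mod_cast hn
  rw [disc_four_one hn]
  apply div_pos
  · nlinarith [pow_pos (by linarith : (0 : ℝ) < n) 5, pow_pos (by linarith : (0 : ℝ) < n) 4,
      pow_pos (by linarith : (0 : ℝ) < n) 3, pow_pos (by linarith : (0 : ℝ) < n) 2]
  · have hm : (0 : ℝ) < n - 2 := by linarith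
    positivity

end OmegaFour

theorem omega_four_case_general (n : ℤ) (hn : 3 ≤ n) :
    ((Set.Ioo (xRoot n 4 1) (yRoot n 4 1) ∩ Set.Ioo (xRoot n 4 2) (yRoot n 4 2)).Nonempty) ∧
    ∃ c : ℝ, ∀ k : ℤ, k = 1 ∨ k = 2 →
      dCoeff n 4 k / (2 * ((n : ℝ) - 2)) * c ^ 2 - ((n : ℝ) - 2) * c +
        ((n : ℝ) - 2) * uCoeff n 4 k / (2 * nu n 4 k ^ 2) < 0 := by
  have hN : (3 : ℝ) ≤ n := by exact_mod_cast hn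
  have hm : (0 : ℝ) < n - 2 := by linarith
  have hn0 : 0 ≤ n := by omega
  set c := ((n : ℝ) - 2) ^ 2 / dCoeff n 4 1
  have hneg : ∀ k : ℤ, k = 1 ∨ k = 2 →
      quad ((n : ℝ) - 2) (dCoeff n 4 k) (uCoeff n 4 k / nu n 4 k ^ 2) c < 0 := by
    rintro k (rfl | rfl)
    · exact quad_vertex_neg hm (dCoeff_four_one_pos hn0) (disc_eq ▸ disc_four_one_pos hn)
    · have hν : 0 < nu n 4 2 ^ 2 := by
        rw [nu_four_two]
        positivity
      exact quad_neg_at_vertex_of_lt hm (dCoeff_four_one_pos hn0) (dCoeff_four_two_lt hn0)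
        (div_neg_of_neg_of_pos (uCoeff_four_two_neg hn) hν)
  refine ⟨⟨c, mem_Ioo_xRoot_yRoot hm (dCoeff_four_one_pos hn0) (hneg 1 (.inl rfl)),
    mem_Ioo_xRoot_yRoot hm (dCoeff_four_two_pos hn0) (hneg 2 (.inr rfl))⟩, c, ?_⟩
  intro k hk
  rw [quad_eq]
  exact hneg k hk

theorem omega_four_case (n : ℤ) (hn : 3 ≤ n) (hωn : 2 * ((4 : ℤ) + 2) ≤ n - 2) :
    ((Set.Ioo (xRoot n 4 1) (yRoot n 4 1) ∩ Set.Ioo (xRoot n 4 2) (yRoot n 4 2)).Nonempty) ∧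
    ∃ c : ℝ, ∀ k : ℤ, k = 1 ∨ k = 2 →
      dCoeff n 4 k / (2 * ((n : ℝ) - 2)) * c ^ 2 - ((n : ℝ) - 2) * c +
        ((n : ℝ) - 2) * uCoeff n 4 k / (2 * nu n 4 k ^ 2) < 0 :=
  omega_four_case_general n hn
end
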